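/- Let s ∈ S and x ∈ I_*. If ℓ(sx) = ℓ(x) − 1, then ℓ(xs*) = ℓ(x) − 1 and s • x • s* = x. -/

import Mathlib

open List

namespace DemazureAux

open scoped Classical

/-- `(-1)^(number of occurrences of t in l)`. -/
noncomputable def sgn {W : Type*} (t : W) (l : List W) : ℤˣ :=
  (l.map (fun u => if t = u then (-1 : ℤˣ) else 1)).prod

variable {W : Type*}

@[simp] lemma sgn_nil (t : W) : sgn t ([] : List W) = 1 := rfl

lemma sgn_cons (t u : W) (l : List W) :
    sgn t (u :: l) = (if t = u then (-1 : ℤˣ) else 1) * sgn t l := by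
  simp [sgn]

lemma sgn_append (t : W) (l₁ l₂ : List W) :
    sgn t (l₁ ++ l₂) = sgn t l₁ * sgn t l₂ := by
  simp [sgn]

lemma sgn_map_congr {α : Type*} {g₁ g₂ : α → W} {t₁ t₂ : W} (L : List α)
    (h : ∀ r, t₁ = g₁ r ↔ t₂ = g₂ r) :
    sgn t₁ (L.map g₁) = sgn t₂ (L.map g₂) := by
  induction L with
  | nil => rfl
  | cons a L ih =>
      simp only [map_cons, sgn_cons, ih]
      congr 1
      by_cases hc : t₁ = g₁ a
      · rw [if_pos hc, if_pos ((h a).mp hc)]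
      · rw [if_neg hc, if_neg (fun hc2 => hc ((h a).mpr hc2))]

lemma sgn_eq_one_of_not_mem {t : W} {l : List W} (h : t ∉ l) : sgn t l = 1 := by
  induction l with
  | nil => rfl
  | cons u l ih =>
      rw [sgn_cons, if_neg (by simp at h; exact h.1), ih (by simp at h; exact h.2), one_mul]

lemma sgn_eq_neg_one_of_mem {t : W} {l : List W} (hn : l.Nodup) (h : t ∈ l) :
    sgn t l = -1 := by
  induction l with
  | nil => simp at h
  | cons u l ih =>
      rw [sgn_cons]
      rcases List.mem_cons.mp h with rfl | h'
      · rw [if_pos rfl, sgn_eq_one_of_not_mem (List.nodup_cons.mp hn).1, mul_one]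
      · rw [ih (List.nodup_cons.mp hn).2 h', if_neg, one_mul]
        rintro rfl
        exact (List.nodup_cons.mp hn).1 h'

lemma mem_of_sgn_eq_neg_one {t : W} {l : List W} (h : sgn t l = -1) : t ∈ l := by
  by_contra hn
  rw [sgn_eq_one_of_not_mem hn] at h
  exact absurd h (by decide)


variable {B : Type*} [Group W] {M : CoxeterMatrix B} (cs : CoxeterSystem M W)

local prefix:100 "s" => cs.simple
local prefix:100 "π" => cs.wordProd

lemma neg_if (P : Prop) [Decidable P] (x : ℤˣ) :
    (if P then -x else x) = (if P then (-1 : ℤˣ) else 1) * x := by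
  split <;> simp

/-- The basic involution of the sign representation. -/
noncomputable def sigmaFun (i : B) : W × ℤˣ → W × ℤˣ :=
  fun p => (s i * p.1 * s i, if p.1 = s i then -p.2 else p.2)

lemma sigmaFun_involutive (i : B) : Function.Involutive (sigmaFun cs i) := by
  rintro ⟨t, ε⟩
  simp only [sigmaFun]
  have hfst : s i * (s i * t * s i) * s i = t := by
    rw [← mul_assoc, ← mul_assoc, cs.simple_mul_simple_self, one_mul,
      mul_assoc, cs.simple_mul_simple_self, mul_one]
  have hcond : (s i * t * s i = s i) ↔ t = s i := by
    constructor
    · intro hc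
      have := congrArg (fun z => s i * z * s i) hc
      simpa [mul_assoc, cs.simple_mul_simple_cancel_left,
        ← mul_assoc, cs.simple_mul_simple_self] using this
    · rintro rfl
      rw [cs.simple_mul_simple_self, one_mul]
  rw [hfst]
  by_cases h : t = s i
  · rw [if_pos h, if_pos (hcond.mpr h), neg_neg]
  · rw [if_neg h, if_neg (fun hc => h (hcond.mp hc))]

/-- The sign representation generator as a permutation. -/
noncomputable def sigma (i : B) : Equiv.Perm (W × ℤˣ) :=
  (sigmaFun_involutive cs i).toPerm

lemma sigma_apply (i : B) (t : W) (ε : ℤˣ) :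
    sigma cs i (t, ε) = (s i * t * s i, if t = s i then -ε else ε) := rfl


/-- The list of dihedral reflections controlling the sign flips of `(σᵢσⱼ)^n`. -/
noncomputable def braidList (i j : B) (n : ℕ) : List W :=
  (List.range (2 * n)).map (fun r => (s j * s i) ^ r * s j)

lemma conj_braid (i j : B) (r : ℕ) :
    (s j * s i) * ((s j * s i) ^ r * s j) * (s i * s j) = (s j * s i) ^ (r + 2) * s j := by
  have h : (s j * s i) ^ (r + 2) = (s j * s i) * (s j * s i) ^ r * (s j * s i) := by
    rw [show r + 2 = 1 + r + 1 by ring, pow_succ, pow_add, pow_one]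
  rw [h]
  group

lemma sigma_pow_apply (i j : B) (n : ℕ) (t : W) (ε : ℤˣ) :
    ((sigma cs i * sigma cs j) ^ n) (t, ε) =
      ((s i * s j) ^ n * t * ((s i * s j) ^ n)⁻¹, ε * sgn t (braidList cs i j n)) := by
  induction n generalizing t ε with
  | zero => simp [braidList]
  | succ n ih =>
    have key : ∀ X : W, (s i * (s j * t * s j) * s i = X) ↔
        (t = (s j * s i) * X * (s i * s j)) := by
      intro X
      constructor
      · rintro rfl
        simp [mul_assoc, cs.simple_mul_simple_cancel_left, cs.simple_mul_simple_self]
      · rintro rfl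
        simp [mul_assoc, cs.simple_mul_simple_cancel_left, cs.simple_mul_simple_self]
    have hlist : braidList cs i j (n + 1) =
        ((s j * s i) ^ 0 * s j) :: ((s j * s i) ^ 1 * s j) ::
          ((List.range (2 * n)).map (fun r => (s j * s i) ^ (r + 2) * s j)) := by
      unfold braidList
      rw [show 2 * (n + 1) = (2 * n + 1) + 1 by ring, List.range_succ_eq_map,
        List.range_succ_eq_map]
      simp only [List.map_cons, List.map_map]
      rfl
    rw [pow_succ, Equiv.Perm.mul_apply, Equiv.Perm.mul_apply, sigma_apply, sigma_apply, ih]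
    dsimp only
    rw [Prod.mk.injEq]
    have h2 : sgn (s i * (s j * t * s j) * s i) (braidList cs i j n) =
        sgn t ((List.range (2 * n)).map (fun r => (s j * s i) ^ (r + 2) * s j)) := by
      unfold braidList
      apply sgn_map_congr
      intro r
      rw [key, conj_braid]
    constructor
    · -- first components
      have h1 : (s i * s j) ^ (n + 1) = (s i * s j) ^ n * (s i * s j) := pow_succ _ _
      rw [h1, mul_inv_rev, mul_inv_rev, cs.inv_simple, cs.inv_simple]
      group
    · -- sign components
      rw [h2, hlist, sgn_cons, sgn_cons]
      have c0 : (s j * t * s j = s i) ↔ (t = (s j * s i) ^ 1 * s j) := by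
        rw [pow_one]
        constructor
        · intro h
          rw [← h]
          simp [mul_assoc, cs.simple_mul_simple_cancel_left, cs.simple_mul_simple_self]
        · rintro rfl
          simp [mul_assoc, cs.simple_mul_simple_cancel_left, cs.simple_mul_simple_self]
      have c1 : (t = s j) ↔ (t = (s j * s i) ^ 0 * s j) := by
        rw [pow_zero, one_mul]
      rw [neg_if, neg_if, ← c0, ← c1]
      by_cases hA : s j * t * s j = s i <;> by_cases hB : t = s j <;>
        simp [hA, hB, mul_comm, mul_left_comm, mul_assoc]


lemma sigma_liftable : M.IsLiftable (sigma cs) := by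
  intro i j
  ext ⟨t, ε⟩
  · rw [sigma_pow_apply]
    simp [cs.simple_mul_simple_pow i j]
  · rw [sigma_pow_apply]
    simp only [Equiv.Perm.one_apply]
    have hper : ∀ r : ℕ, (s j * s i) ^ (M i j + r) * s j = (s j * s i) ^ r * s j := by
      intro r
      rw [pow_add, cs.simple_mul_simple_pow' i j, one_mul]
    have hsplit : braidList cs i j (M i j) =
        ((List.range (M i j)).map (fun r => (s j * s i) ^ r * s j)) ++
        ((List.range (M i j)).map (fun r => (s j * s i) ^ r * s j)) := by
      unfold braidList
      rw [two_mul, List.range_add, List.map_append, List.map_map]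
      congr 1
      apply List.map_congr_left
      intro r _
      simp only [Function.comp_apply]
      exact hper r
    rw [hsplit, sgn_append, Int.units_mul_self, mul_one]

/-- The sign representation of the Coxeter group. -/
noncomputable def phi : W →* Equiv.Perm (W × ℤˣ) :=
  cs.lift ⟨sigma cs, sigma_liftable cs⟩

lemma phi_simple (i : B) : phi cs (s i) = sigma cs i :=
  cs.lift_apply_simple (sigma_liftable cs) i

lemma phi_wordProd (ω : List B) (t : W) (ε : ℤˣ) :
    phi cs (π ω) (t, ε) = (π ω * t * (π ω)⁻¹, ε * sgn t (cs.rightInvSeq ω)) := by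
  induction ω generalizing t ε with
  | nil => simp
  | cons i ω ih =>
    rw [cs.wordProd_cons, map_mul, Equiv.Perm.mul_apply, ih, phi_simple, sigma_apply]
    have hris : cs.rightInvSeq (i :: ω) = ((π ω)⁻¹ * s i * π ω) :: cs.rightInvSeq ω := rfl
    rw [hris, sgn_cons, Prod.mk.injEq]
    have hcond : (π ω * t * (π ω)⁻¹ = s i) ↔ (t = (π ω)⁻¹ * s i * π ω) := by
      constructor
      · intro h
        rw [← h]
        group
      · rintro rfl
        group
    constructor
    · rw [mul_inv_rev, cs.inv_simple]
      group
    · rw [neg_if, ← hcond]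
      by_cases hc : π ω * t * (π ω)⁻¹ = s i <;>
        simp [hc, mul_comm, mul_left_comm, mul_assoc]

lemma sgn_ris_congr {ω₁ ω₂ : List B} (h : π ω₁ = π ω₂) (t : W) :
    sgn t (cs.rightInvSeq ω₁) = sgn t (cs.rightInvSeq ω₂) := by
  have h1 := phi_wordProd cs ω₁ t 1
  have h2 := phi_wordProd cs ω₂ t 1
  rw [h] at h1
  rw [h1] at h2
  have := (Prod.mk.injEq _ _ _ _).mp h2
  simpa using this.2


lemma sgn_map_conj (c t : W) (l : List W) :
    sgn t (l.map (fun x => c * x * c⁻¹)) = sgn (c⁻¹ * t * c) l := by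
  induction l with
  | nil => rfl
  | cons x l ih =>
    rw [List.map_cons, sgn_cons, sgn_cons, ih]
    congr 1
    have : (t = c * x * c⁻¹) ↔ (c⁻¹ * t * c = x) := by
      constructor
      · rintro rfl
        group
      · rintro rfl
        group
    by_cases hc : t = c * x * c⁻¹
    · rw [if_pos hc, if_pos (this.mp hc)]
    · rw [if_neg hc, if_neg (fun hx => hc (this.mpr hx))]

/-- The lifting property: if `ℓ(s i * w) = ℓ(w) + 1` and `ℓ(w * s j) = ℓ(w) + 1` but
multiplying by both does not increase length by 2, then `s i * w = w * s j`. -/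
lemma lifting (i j : B) (w : W)
    (h1 : cs.length (s i * w) = cs.length w + 1)
    (h2 : cs.length (w * s j) = cs.length w + 1)
    (h3 : cs.length (s i * (w * s j)) < cs.length (w * s j)) :
    s i * w = w * s j := by
  by_contra hne
  set t : W := (w * s j)⁻¹ * s i * (w * s j) with ht
  obtain ⟨ω, hred, hω⟩ := cs.exists_reduced_word' w
  -- length of u := s i * w * s j
  have hu : cs.length (s i * (w * s j)) = cs.length w := by
    rcases cs.length_simple_mul (w * s j) i with h | h
    · omega
    · omega
  set u : W := s i * (w * s j) with hudef
  obtain ⟨ω', hred', hω'⟩ := cs.exists_reduced_word' u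
  have hsu : s i * u = w * s j := by
    rw [hudef, ← mul_assoc, ← mul_assoc, cs.simple_mul_simple_self, one_mul]
  -- word2 = i :: ω' is a reduced word for w * s j
  have hπ2 : π (i :: ω') = w * s j := by
    rw [cs.wordProd_cons, ← hω', hsu]
  have red2 : cs.IsReduced (i :: ω') := by
    unfold CoxeterSystem.IsReduced
    rw [hπ2, h2, List.length_cons]
    rw [CoxeterSystem.IsReduced] at hred'
    rw [← hω'] at hred'
    omega
  -- t is the head of the right inversion sequence of i :: ω'
  have hhead : t = (π ω')⁻¹ * s i * π ω' := by
    rw [← hω', ht, ← hsu, mul_inv_rev, cs.inv_simple]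
    simp [mul_assoc, cs.simple_mul_simple_cancel_left]
  have hmem2 : t ∈ cs.rightInvSeq (i :: ω') := by
    have : cs.rightInvSeq (i :: ω') = ((π ω')⁻¹ * s i * π ω') :: cs.rightInvSeq ω' := rfl
    rw [this, hhead]
    exact List.mem_cons_self
  have hsgn2 : sgn t (cs.rightInvSeq (i :: ω')) = -1 :=
    sgn_eq_neg_one_of_mem red2.nodup_rightInvSeq hmem2
  -- word1 = ω ++ [j] is also a word for w * s j
  have hπ1 : π (ω.concat j) = w * s j := by
    rw [cs.wordProd_concat, ← hω]
  have hsgn1 : sgn t (cs.rightInvSeq (ω.concat j)) = -1 := by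
    exact (sgn_ris_congr cs (hπ1.trans hπ2.symm) t).trans hsgn2
  -- unravel word1's inversion sequence
  have htj : t ≠ s j := by
    intro hc
    apply hne
    have h5 : (w * s j) * t = (w * s j) * s j := by rw [hc]
    rw [ht, ← mul_assoc, mul_inv_cancel_left,
      mul_assoc w (s j) (s j), cs.simple_mul_simple_self, mul_one] at h5
    -- h5 : s i * (w * s j) = w
    have h7 := congrArg (fun z => s i * z) h5
    rw [cs.simple_mul_simple_cancel_left] at h7
    exact h7.symm
  have hconc : cs.rightInvSeq (ω.concat j)
      = (List.map (MulAut.conj (s j)) (cs.rightInvSeq ω)).concat (s j) :=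
    cs.rightInvSeq_concat ω j
  rw [hconc, List.concat_eq_append, sgn_append] at hsgn1
  have hlast : sgn t [s j] = 1 := by
    simp [sgn_cons, htj]
  rw [hlast, mul_one] at hsgn1
  have hmc : List.map (MulAut.conj (s j)) (cs.rightInvSeq ω)
      = (cs.rightInvSeq ω).map (fun x => s j * x * (s j)⁻¹) := by
    apply List.map_congr_left
    intro x _
    rfl
  rw [hmc, sgn_map_conj] at hsgn1
  have hmem : (s j)⁻¹ * t * s j ∈ cs.rightInvSeq ω := mem_of_sgn_eq_neg_one hsgn1
  have hinv := cs.isRightInversion_of_mem_rightInvSeq hred hmem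
  have hlt := hinv.2
  rw [← hω] at hlt
  have hwt : w * ((s j)⁻¹ * t * s j) = s i * w := by
    simp [ht, mul_inv_rev, cs.inv_simple, mul_assoc,
      cs.simple_mul_simple_cancel_left, cs.simple_mul_simple_self]
  rw [hwt] at hlt
  omega


lemma d_right (d : W → W → W)
    (hd_assoc : ∀ u v w : W, d (d u v) w = d u (d v w))
    (hd_one_left : ∀ w : W, d 1 w = w)
    (hd_simple_lt : ∀ (i : B) (w : W), cs.length (cs.simple i * w) = cs.length w + 1 →
      d (cs.simple i) w = cs.simple i * w)
    (hd_simple_gt : ∀ (i : B) (w : W), cs.length (cs.simple i * w) + 1 = cs.length w →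
      d (cs.simple i) w = w) :
    ∀ (n : ℕ) (u : W), cs.length u = n → ∀ j : B,
      (cs.length (u * s j) = cs.length u + 1 → d u (s j) = u * s j) ∧
      (cs.length (u * s j) + 1 = cs.length u → d u (s j) = u) := by
  intro n
  induction n using Nat.strong_induction_on with
  | _ n ih =>
    intro u hn j
    rcases Nat.eq_zero_or_pos n with rfl | hpos
    · have hu1 : u = 1 := cs.length_eq_zero_iff.mp hn
      constructor
      · intro _
        rw [hu1, hd_one_left, one_mul]
      · intro hc
        omega
    · have hne : u ≠ 1 := by
        intro h
        rw [h, cs.length_one] at hn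
        omega
      obtain ⟨k, hk⟩ := cs.exists_leftDescent_of_ne_one hne
      have hltk : cs.length (s k * u) < cs.length u := hk
      have hvlen : cs.length (s k * u) + 1 = cs.length u := by
        rcases cs.length_simple_mul u k with h | h
        · omega
        · exact h
      set v := s k * u with hv
      have huv : u = s k * v := (cs.simple_mul_simple_cancel_left k).symm
      have hlv : cs.length (s k * v) = cs.length v + 1 := by
        rw [← huv]
        omega
      have hdkv : d (s k) v = s k * v := hd_simple_lt k v hlv
      have hdu : ∀ x, d u x = d (s k) (d v x) := by
        intro x
        calc d u x = d (d (s k) v) x := by rw [hdkv, ← huv]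
        _ = d (s k) (d v x) := hd_assoc _ _ _
      have hIH := ih (cs.length v) (by omega) v rfl j
      rcases cs.length_mul_simple v j with hA | hB
      · have hdvj : d v (s j) = v * s j := hIH.1 hA
        rcases cs.length_simple_mul (v * s j) k with hA1 | hA2
        · have hres : d u (s j) = u * s j := by
            rw [hdu, hdvj, hd_simple_lt k _ hA1, ← mul_assoc, ← huv]
          have h9 : cs.length (u * s j) = cs.length u + 1 := by
            rw [huv, mul_assoc]
            omega
          exact ⟨fun _ => hres, fun hdown => absurd hdown (by omega)⟩
        · have hlift : s k * v = v * s j := lifting cs k j v hlv hA (by omega)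
          have hres : d u (s j) = u := by
            rw [hdu, hdvj, hd_simple_gt k _ hA2, ← hlift, ← huv]
          have hlen : cs.length (u * s j) + 1 = cs.length u := by
            rw [huv, mul_assoc]
            omega
          exact ⟨fun hup => absurd hup (by omega), fun _ => hres⟩
      · have hdvj : d v (s j) = v := hIH.2 hB
        have hres : d u (s j) = u := by
          rw [hdu, hdvj, hdkv, ← huv]
        have hlen : cs.length (u * s j) + 1 = cs.length u := by
          have h10 := cs.length_simple_mul (v * s j) k
          have h11 := cs.length_mul_simple u j
          have h12 : u * s j = s k * (v * s j) := by rw [huv, mul_assoc]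
          rw [h12] at h11 ⊢
          omega
        exact ⟨fun hup => absurd hup (by omega), fun _ => hres⟩

lemma length_map_le (g : W ≃* W) (hg : ∀ i : B, ∃ j : B, g (s i) = s j) (w : W) :
    cs.length (g w) ≤ cs.length w := by
  obtain ⟨ω, hred, hω⟩ := cs.exists_reduced_word' w
  have key : ∀ ω : List B, ∃ ω' : List B, ω'.length = ω.length ∧ g (π ω) = π ω' := by
    intro ω
    induction ω with
    | nil => exact ⟨[], by simp, by simp⟩
    | cons i ω ihω =>
      obtain ⟨j, hj⟩ := hg i
      obtain ⟨ω', hlen, hπ⟩ := ihω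
      exact ⟨j :: ω', by simp [hlen], by rw [cs.wordProd_cons, cs.wordProd_cons, map_mul, hπ, hj]⟩
  obtain ⟨ω', hlen, hπ⟩ := key ω
  calc cs.length (g w) = cs.length (π ω') := by rw [hω, hπ]
  _ ≤ ω'.length := cs.length_wordProd_le ω'
  _ = ω.length := hlen
  _ = cs.length w := by rw [CoxeterSystem.IsReduced] at hred; rw [hω, hred]

lemma length_map_eq (g : W ≃* W) (hg : ∀ i : B, ∃ j : B, g (s i) = s j)
    (hinv : ∀ w : W, g (g w) = w) (w : W) :
    cs.length (g w) = cs.length w := by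
  refine le_antisymm (length_map_le cs g hg w) ?_
  have := length_map_le cs g hg (g w)
  rwa [hinv] at this

end DemazureAux


/-- Let `s` be a simple reflection and `x` a twisted involution. If `ℓ(s*x) = ℓ(x) - 1`,
then `ℓ(x*s⋆) = ℓ(x) - 1` and `s • x • s⋆ = x` (Demazure products). -/
theorem demazure_conjugate_simple_down
    {B : Type*} [Finite B] {W : Type*} [Group W] {M : CoxeterMatrix B}
    (cs : CoxeterSystem M W)
    (d : W → W → W)
    (hd_assoc : ∀ u v w : W, d (d u v) w = d u (d v w))
    (hd_one_left : ∀ w : W, d 1 w = w)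
    (hd_one_right : ∀ w : W, d w 1 = w)
    (hd_simple_lt : ∀ (i : B) (w : W), cs.length (cs.simple i * w) = cs.length w + 1 →
      d (cs.simple i) w = cs.simple i * w)
    (hd_simple_gt : ∀ (i : B) (w : W), cs.length (cs.simple i * w) + 1 = cs.length w →
      d (cs.simple i) w = w)
    (f : W ≃* W)
    (hf_invol : ∀ w : W, f (f w) = w)
    (hf_simple : ∀ i : B, ∃ j : B, f (cs.simple i) = cs.simple j) :
    ∀ (i : B) (x : W), f x = x⁻¹ →
      cs.length (cs.simple i * x) + 1 = cs.length x →
      cs.length (x * f (cs.simple i)) + 1 = cs.length x ∧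
      d (d (cs.simple i) x) (f (cs.simple i)) = x := by
  intro i x hx hlen
  obtain ⟨j, hj⟩ := hf_simple i
  have hflen : ∀ w : W, cs.length (f w) = cs.length w :=
    DemazureAux.length_map_eq cs f hf_simple hf_invol
  have hkey : x * f (cs.simple i) = (f (cs.simple i * x))⁻¹ := by
    rw [map_mul, hx, mul_inv_rev, inv_inv, hj, cs.inv_simple]
  have h1 : cs.length (x * f (cs.simple i)) + 1 = cs.length x := by
    rw [hkey, cs.length_inv, hflen]
    exact hlen
  refine ⟨h1, ?_⟩
  rw [hd_simple_gt i x hlen, hj]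
  have h2 : cs.length (x * cs.simple j) + 1 = cs.length x := by
    rw [← hj]
    exact h1
  exact (DemazureAux.d_right cs d hd_assoc hd_one_left hd_simple_lt hd_simple_gt
    (cs.length x) x rfl j).2 h2
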